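/- Let P be a shift-invariant probability measure on Δ^ℤ (Δ finite) and let Q_P = {τ_w(P_ℕ) : w a finite word (including the empty word)}. If the linear span V_P of Q_P is finite dimensional, then the conditional future distribution P(X_{≥1} ∈ ·|X_{≤0}) takes values in V_P ∩ P(Δ^ℕ) almost surely; in particular the support of the causal state distribution is contained in the finite-dimensional affine set V_P ∩ P(Δ^ℕ). -/

import Mathlib

open MeasureTheory ProbabilityTheory Filter Topology

variable {Δ : Type*} [Fintype Δ] [MeasurableSpace Δ] [MeasurableSingletonClass Δ]
  [TopologicalSpace Δ] [DiscreteTopology Δ]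

/-- The `n`-fold one-sided shift on `Δ^ℕ`. -/
def shiftN (n : ℕ) : (ℕ → Δ) → (ℕ → Δ) := fun x k => x (k + n)

/-- The cylinder set `[w]` in `Δ^ℕ`. -/
def cylN {n : ℕ} (w : Fin n → Δ) : Set (ℕ → Δ) := {x | ∀ i : Fin n, x (i : ℕ) = w i}

/-- The future `X_ℕ = (X_1, X_2, …)` of a two-sided trajectory. -/
def futureMap : (ℤ → Δ) → (ℕ → Δ) := fun ω n => ω ((n : ℤ) + 1)

/-- The past `(X_0, X_{-1}, …)` of a two-sided trajectory. -/
def pastMap : (ℤ → Δ) → (ℕ → Δ) := fun ω n => ω (-(n : ℤ))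

/-- The σ-algebra generated by the past coordinates `X_k`, `k ≤ 0`. -/
def pastSA (Δ : Type*) [MeasurableSpace Δ] : MeasurableSpace (ℤ → Δ) :=
  MeasurableSpace.comap pastMap MeasurableSpace.pi

/-- `P_ℕ = P ∘ X_ℕ⁻¹`. -/
noncomputable def Pnat (P : Measure (ℤ → Δ)) : Measure (ℕ → Δ) := P.map futureMap

/-- `τ_w(Q)(B) = Q([w] ∩ σ^{-n} B)`. -/
noncomputable def tauMeas (Q : Measure (ℕ → Δ)) {n : ℕ} (w : Fin n → Δ) : Measure (ℕ → Δ) :=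
  (Q.restrict (cylN w)).map (shiftN n)

/-- The weak*-realization of a finite measure: the functional `f ↦ ∫ f dμ` on continuous
functions.  The space `C(X,ℝ) → ℝ` carries the topology of pointwise convergence, so that
convergence of these functionals is exactly weak* convergence of the measures. -/
noncomputable def funcOf {X : Type*} [TopologicalSpace X] [MeasurableSpace X]
    (μ : Measure X) : C(X, ℝ) → ℝ :=
  fun f => ∫ x, f x ∂μ

/-- The canonical OOM vector space `V_P`: the span of the functionals of the measures
`τ_w(P_ℕ)` over all finite words `w` (including the empty word). -/
noncomputable def VP (P : Measure (ℤ → Δ)) : Submodule ℝ (C((ℕ → Δ), ℝ) → ℝ) :=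
  Submodule.span ℝ {g | ∃ (n : ℕ) (w : Fin n → Δ), g = funcOf (tauMeas (Pnat P) w)}

/-- A version of the conditional distribution of the future given the past. -/
noncomputable def condFuture [StandardBorelSpace Δ] (P : Measure (ℤ → Δ)) [IsFiniteMeasure P]
    (ω : ℤ → Δ) : Measure (ℕ → Δ) :=
  ((condExpKernel P (pastSA Δ)) ω).map futureMap

/-- The conditional distribution of the future, as a probability measure. -/
noncomputable def condFutureP [StandardBorelSpace Δ] (P : Measure (ℤ → Δ))
    [IsProbabilityMeasure P] (ω : ℤ → Δ) : ProbabilityMeasure (ℕ → Δ) :=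
  ⟨condFuture P ω, by
    have hf : Measurable (futureMap (Δ := Δ)) :=
      measurable_pi_lambda _ fun n => measurable_pi_apply _
    haveI : IsProbabilityMeasure ((condExpKernel P (pastSA Δ)) ω) :=
      IsMarkovKernel.isProbabilityMeasure ω
    exact Measure.isProbabilityMeasure_map hf.aemeasurable⟩

/-- The causal state distribution `μ_C^P`: the law of the conditional future distribution,
a measure on `P(Δ^ℕ)`. -/
noncomputable def causalDist [StandardBorelSpace Δ]
    [MeasurableSpace (ProbabilityMeasure (ℕ → Δ))]
    (P : Measure (ℤ → Δ)) [IsProbabilityMeasure P] : Measure (ProbabilityMeasure (ℕ → Δ)) :=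
  P.map (condFutureP P)

/-- The topological support of a measure. -/
def msupport {X : Type*} [TopologicalSpace X] [MeasurableSpace X] (μ : Measure X) : Set X :=
  {x | ∀ U : Set X, IsOpen U → x ∈ U → μ U ≠ 0}

/-!
Let `L_ω` be the functional `g ↦ ∫ g d P(X_{≥1} ∈ · | X_{≤0})(ω)`. By stationarity, the average
of `L_ω` over the past cylinder `{X_0 = w_0, …, X_{-n+1} = w_{n-1}}` is the functional of
`τ_{w_{n-1} ⋯ w_0}(P_ℕ)`, which lies in `V_P`. As `V_P` is a finite-dimensional space of
functions, there are finitely many test functions `f_x` and vectors `v_x ∈ V_P` with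
`L = ∑ₓ L(f_x) v_x` for every `L ∈ V_P`. For a fixed `g`, the defect
`L_ω(g) - ∑ₓ L_ω(f_x) v_x(g)` is `L_ω` applied to one continuous function; its averages over all
past cylinders vanish, so by the π-λ theorem its conditional expectation given the past vanishes.
Since `C(Δ^ℕ, ℝ)` is separable, a.s. `L_ω = ∑ₓ L_ω(f_x) v_x ∈ V_P`. Finally `V_P` is closed in the
weak* topology, so the support of the law of `L_ω` stays in it.
-/

theorem Submodule.exists_finset_eq_sum_eval_smul {X 𝕜 : Type*} [Field 𝕜]
    (V : Submodule 𝕜 (X → 𝕜)) [FiniteDimensional 𝕜 V] :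
    ∃ (t : Finset X) (v : t → V), ∀ L : V, L = ∑ x : t, (L : X → 𝕜) x • v x := by
  classical
  -- artinianity: some finite intersection of the evaluation kernels is already `⊥`
  obtain ⟨t, ht⟩ := Finset.exists_inf_le fun x : X =>
    LinearMap.ker ((LinearMap.proj x : (X → 𝕜) →ₗ[𝕜] 𝕜).comp V.subtype)
  let E : V →ₗ[𝕜] t → 𝕜 := LinearMap.pi fun x : t => (LinearMap.proj (x : X)).comp V.subtype
  have hE : LinearMap.ker E = ⊥ := by
    refine (Submodule.eq_bot_iff _).2 fun L hL => Subtype.ext (funext fun x => ?_)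
    exact ht x (Submodule.mem_finsetInf.2 fun y hy => congrFun hL ⟨y, hy⟩)
  obtain ⟨ψ, hψ⟩ := E.exists_leftInverse_of_injective hE
  refine ⟨t, fun x => ψ (Pi.single x 1), fun L => ?_⟩
  calc L = ψ (E L) := (LinearMap.congr_fun hψ L).symm
    _ = ψ (∑ x : t, (L : X → 𝕜) x • Pi.single x 1) := congrArg ψ (pi_eq_sum_univ' (E L))
    _ = _ := by simp only [map_sum, map_smul]

theorem setIntegral_preimage_eq_zero_of_isPiSystem {Ω β E : Type*} [MeasurableSpace Ω]
    {mβ : MeasurableSpace β} [NormedAddCommGroup E] [NormedSpace ℝ E] {μ : Measure Ω}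
    {f : Ω → E} {π : Ω → β} {S : Set (Set β)} (hf : Integrable f μ) (hπ : Measurable π)
    (h_eq : mβ = MeasurableSpace.generateFrom S) (h_inter : IsPiSystem S) (h_univ : Set.univ ∈ S)
    (basic : ∀ t ∈ S, ∫ x in π ⁻¹' t, f x ∂μ = 0) {t : Set β} (ht : MeasurableSet t) :
    ∫ x in π ⁻¹' t, f x ∂μ = 0 := by
  induction t, ht using MeasurableSpace.induction_on_inter h_eq h_inter with
  | empty => simp
  | basic t ht => exact basic t ht
  | compl t ht ih =>
    have htotal := basic _ h_univ
    rw [Set.preimage_univ, setIntegral_univ] at htotal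
    rw [Set.preimage_compl, setIntegral_compl (hπ ht) hf, ih, htotal, sub_zero]
  | iUnion g hd hg ih =>
    rw [Set.preimage_iUnion, integral_iUnion (fun i => hπ (hg i))
      (fun i j hij => (hd hij).preimage π) hf.integrableOn]
    simp [ih]

theorem ae_eq_of_forall_ae_apply_eq {Ω Y Z : Type*} [MeasurableSpace Ω] {μ : Measure Ω}
    [TopologicalSpace Y] [TopologicalSpace.SeparableSpace Y] [TopologicalSpace Z] [T2Space Z]
    {F G : Ω → Y → Z} (hF : ∀ ω, Continuous (F ω)) (hG : ∀ ω, Continuous (G ω))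
    (h : ∀ y, ∀ᵐ ω ∂μ, F ω y = G ω y) : ∀ᵐ ω ∂μ, F ω = G ω := by
  obtain ⟨D, hDc, hDd⟩ := TopologicalSpace.exists_countable_dense Y
  filter_upwards [(ae_ball_iff hDc).2 fun y _ => h y] with ω hω
  exact Continuous.ext_on hDd (hF ω) (hG ω) hω

theorem msupport_map_subset_of_ae_mem {Ω X : Type*} [MeasurableSpace Ω] [TopologicalSpace X]
    [MeasurableSpace X] [OpensMeasurableSpace X] {μ : Measure Ω} {F : Ω → X} {S : Set X}
    (hS : IsClosed S) (h : ∀ᵐ ω ∂μ, F ω ∈ S) : msupport (μ.map F) ⊆ S := by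
  intro x hx
  by_contra hxS
  refine hx Sᶜ hS.isOpen_compl hxS ?_
  by_cases hF : AEMeasurable F μ
  · rw [Measure.map_apply_of_aemeasurable hF hS.isOpen_compl.measurableSet]
    exact ae_iff.1 h
  · rw [Measure.map_of_not_aemeasurable hF, Measure.coe_zero, Pi.zero_apply]

section CompactSpace

variable {X : Type*} [TopologicalSpace X] [CompactSpace X] [MeasurableSpace X]

theorem funcOf_eq_integralCLM_comp_toLp [BorelSpace X] (μ : Measure X) [IsFiniteMeasure μ] :
    funcOf μ = ⇑(L1.integralCLM.comp (ContinuousMap.toLp 1 μ ℝ)) := by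
  funext f
  rw [ContinuousLinearMap.comp_apply, ← L1.integral_eq, L1.integral_eq_integral]
  exact (integral_congr_ae (ContinuousMap.coeFn_toLp μ f)).symm

theorem continuous_funcOf [BorelSpace X] (μ : Measure X) [IsFiniteMeasure μ] :
    Continuous (funcOf μ) := by
  rw [funcOf_eq_integralCLM_comp_toLp]
  exact ContinuousLinearMap.continuous _

theorem funcOf_sub_sum_smul [BorelSpace X] (μ : Measure X) [IsFiniteMeasure μ] (g : C(X, ℝ))
    {ι : Type*} (s : Finset ι) (c : ι → ℝ) (f : ι → C(X, ℝ)) :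
    funcOf μ (g - ∑ i ∈ s, c i • f i) = funcOf μ g - ∑ i ∈ s, c i * funcOf μ (f i) := by
  rw [funcOf_eq_integralCLM_comp_toLp]
  simp [map_sub, map_sum, map_smul]

theorem continuous_funcOf_probabilityMeasure [OpensMeasurableSpace X] :
    Continuous fun ρ : ProbabilityMeasure X => funcOf (ρ : Measure X) :=
  continuous_pi fun g => ProbabilityMeasure.continuous_integral_boundedContinuousFunction
    (BoundedContinuousFunction.mkOfCompact g)

end CompactSpace

section Trajectories

variable {α : Type*}

theorem measurable_futureMap [MeasurableSpace α] : Measurable (futureMap : (ℤ → α) → ℕ → α) :=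
  measurable_pi_lambda _ fun _ => measurable_pi_apply _

theorem measurable_pastMap [MeasurableSpace α] : Measurable (pastMap : (ℤ → α) → ℕ → α) :=
  measurable_pi_lambda _ fun _ => measurable_pi_apply _

theorem measurable_shiftN [MeasurableSpace α] (n : ℕ) :
    Measurable (shiftN n : (ℕ → α) → ℕ → α) :=
  measurable_pi_lambda _ fun _ => measurable_pi_apply _

theorem continuous_futureMap [TopologicalSpace α] : Continuous (futureMap : (ℤ → α) → ℕ → α) :=
  continuous_pi fun _ => continuous_apply _

theorem measurableSet_cylN [MeasurableSpace α] [MeasurableSingletonClass α] {n : ℕ}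
    (w : Fin n → α) : MeasurableSet (cylN w) := by
  rw [show cylN w = ⋂ i : Fin n, (fun x : ℕ → α => x i) ⁻¹' {w i} by ext; simp [cylN]]
  exact MeasurableSet.iInter fun i => measurable_pi_apply _ (measurableSet_singleton _)

theorem isPiSystem_cylN : IsPiSystem {S : Set (ℕ → α) | ∃ (n : ℕ) (w : Fin n → α), S = cylN w} := by
  rintro _ ⟨n, w, rfl⟩ _ ⟨m, v, rfl⟩ ⟨x, hxw, hxv⟩
  wlog hnm : n ≤ m generalizing n m w v
  · rw [Set.inter_comm]
    exact this m v n w hxv hxw (le_of_not_ge hnm)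
  refine ⟨m, v, Set.inter_eq_right.2 fun y hy i => ?_⟩
  have hi : (i : ℕ) < m := i.2.trans_le hnm
  exact ((hy ⟨i, hi⟩).trans (hxv ⟨i, hi⟩).symm).trans (hxw i)

theorem generateFrom_cylN [MeasurableSpace α] [MeasurableSingletonClass α] [Countable α] :
    (MeasurableSpace.pi : MeasurableSpace (ℕ → α)) =
      MeasurableSpace.generateFrom {S | ∃ (n : ℕ) (w : Fin n → α), S = cylN w} := by
  refine le_antisymm (iSup_le fun i => Measurable.comap_le ?_)
    (MeasurableSpace.generateFrom_le ?_)
  · refine @measurable_to_countable' α (ℕ → α) _ _ (.generateFrom _) _ fun a => ?_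
    have : (fun x : ℕ → α => x i) ⁻¹' {a} =
        ⋃ (w : Fin (i + 1) → α) (_ : w (Fin.last i) = a), cylN w := by
      ext x
      simp only [Set.mem_preimage, Set.mem_singleton_iff, Set.mem_iUnion, cylN, Set.mem_ofPred_eq]
      exact ⟨fun hx => ⟨fun j => x j, hx, fun j => rfl⟩, fun ⟨w, hw, hxw⟩ => (hxw _).trans hw⟩
    rw [this]
    exact .iUnion fun w => .iUnion fun _ => MeasurableSpace.measurableSet_generateFrom ⟨_, w, rfl⟩
  · rintro _ ⟨n, w, rfl⟩
    exact measurableSet_cylN w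

theorem iterate_shift_apply (n : ℕ) (x : ℤ → α) (k : ℤ) :
    (fun (y : ℤ → α) (k : ℤ) => y (k + 1))^[n] x k = x (k + n) := by
  induction n generalizing x with
  | zero => simp
  | succ m ih =>
    rw [Function.iterate_succ_apply, ih]
    congr 1
    push_cast
    ring

theorem futureMap_iterate_shift (n : ℕ) (ω : ℤ → α) :
    futureMap ((fun (y : ℤ → α) (k : ℤ) => y (k + 1))^[n] ω) = shiftN n (futureMap ω) := by
  funext k
  simp only [futureMap, shiftN, iterate_shift_apply]
  congr 1
  push_cast
  ring

theorem pastMap_iterate_shift_mem_cylN_iff {n : ℕ} (w : Fin n → α) (ω : ℤ → α) :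
    pastMap ((fun (y : ℤ → α) (k : ℤ) => y (k + 1))^[n] ω) ∈ cylN w ↔
      futureMap ω ∈ cylN fun i => w i.rev := by
  simp only [cylN, Set.mem_ofPred_eq, pastMap, futureMap, iterate_shift_apply]
  rw [← Fin.revPerm.forall_congr_right]
  refine forall_congr' fun i => ?_
  simp only [Fin.revPerm_apply]
  rw [show -((i.rev : ℕ) : ℤ) + n = (i : ℕ) + 1 by rw [Fin.val_rev]; omega]

theorem map_futureMap_restrict_pastMap_cylN [MeasurableSpace α] [MeasurableSingletonClass α]
    {P : Measure (ℤ → α)} (hP : MeasurePreserving (fun (x : ℤ → α) (k : ℤ) => x (k + 1)) P P)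
    {n : ℕ} (w : Fin n → α) :
    (P.restrict (pastMap ⁻¹' cylN w)).map futureMap = tauMeas (Pnat P) fun i => w i.rev := by
  ext B hB
  have hpre : (fun (x : ℤ → α) (k : ℤ) => x (k + 1))^[n] ⁻¹' (futureMap ⁻¹' B ∩ pastMap ⁻¹' cylN w)
      = futureMap ⁻¹' (shiftN n ⁻¹' B ∩ cylN fun i => w i.rev) := by
    ext ω
    simp only [Set.mem_preimage, Set.mem_inter_iff, futureMap_iterate_shift,
      pastMap_iterate_shift_mem_cylN_iff]
  rw [Measure.map_apply measurable_futureMap hB, Measure.restrict_apply (measurable_futureMap hB),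
    tauMeas, Measure.map_apply (measurable_shiftN n) hB,
    Measure.restrict_apply (measurable_shiftN n hB), Pnat,
    Measure.map_apply measurable_futureMap ((measurable_shiftN n hB).inter (measurableSet_cylN _)),
    ← hpre]
  exact ((hP.iterate n).measure_preimage ((measurable_futureMap hB).inter
    (measurable_pastMap (measurableSet_cylN w))).nullMeasurableSet).symm

instance [MeasurableSpace α] (P : Measure (ℤ → α)) [IsFiniteMeasure P] :
    IsFiniteMeasure (Pnat P) := by
  unfold Pnat
  infer_instance

instance [MeasurableSpace α] (Q : Measure (ℕ → α)) [IsFiniteMeasure Q] {n : ℕ} (w : Fin n → α) :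
    IsFiniteMeasure (tauMeas Q w) := by
  unfold tauMeas
  infer_instance

instance [MeasurableSpace α] [StandardBorelSpace α] (P : Measure (ℤ → α)) [IsProbabilityMeasure P]
    (ω : ℤ → α) : IsProbabilityMeasure (condFuture P ω) :=
  (condFutureP P ω).2

end Trajectories

theorem continuous_of_mem_VP {P : Measure (ℤ → Δ)} [IsFiniteMeasure P]
    {L : C(ℕ → Δ, ℝ) → ℝ} (hL : L ∈ VP P) : Continuous L := by
  induction hL using Submodule.span_induction with
  | mem g hg =>
    obtain ⟨n, w, rfl⟩ := hg
    exact continuous_funcOf _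
  | zero => exact continuous_const
  | add _ _ _ _ ha hb => exact ha.add hb
  | smul r _ _ ha => exact ha.const_smul r

theorem ae_funcOf_condFuture_eq_zero [StandardBorelSpace Δ] {P : Measure (ℤ → Δ)}
    [IsFiniteMeasure P] (hP : MeasurePreserving (fun (x : ℤ → Δ) (k : ℤ) => x (k + 1)) P P)
    (h : C(ℕ → Δ, ℝ)) (h0 : ∀ (n : ℕ) (w : Fin n → Δ), funcOf (tauMeas (Pnat P) w) h = 0) :
    ∀ᵐ ω ∂P, funcOf (condFuture P ω) h = 0 := by
  have hm : pastSA Δ ≤ MeasurableSpace.pi := measurable_pastMap.comap_le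
  have hint : Integrable (fun ω => h (futureMap ω)) P :=
    (h.continuous.comp continuous_futureMap).integrable_of_hasCompactSupport
      (.of_compactSpace _)
  have hpast : ∀ s, MeasurableSet[pastSA Δ] s → ∫ ω in s, h (futureMap ω) ∂P = 0 := by
    rintro _ ⟨B, hB, rfl⟩
    refine setIntegral_preimage_eq_zero_of_isPiSystem hint measurable_pastMap generateFrom_cylN
      isPiSystem_cylN ⟨0, Fin.elim0, ?_⟩ ?_ hB
    · ext x
      simp [cylN]
    · rintro _ ⟨n, w, rfl⟩
      rw [← integral_map measurable_futureMap.aemeasurable h.continuous.aestronglyMeasurable,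
        map_futureMap_restrict_pastMap_cylN hP]
      exact h0 n _
  have hcond : P[fun ω => h (futureMap ω) | pastSA Δ] =ᵐ[P] 0 :=
    (ae_eq_condExp_of_forall_setIntegral_eq hm hint (fun _ _ _ => integrableOn_zero)
      (fun s hs _ => by rw [hpast s hs]; simp) aestronglyMeasurable_zero).symm
  filter_upwards [hcond, condExp_ae_eq_integral_condExpKernel hm hint] with ω h1 h2
  rw [funcOf, condFuture, integral_map measurable_futureMap.aemeasurable
    h.continuous.aestronglyMeasurable, ← h2, h1]
  rfl

theorem ae_funcOf_condFuture_mem_VP [StandardBorelSpace Δ] {P : Measure (ℤ → Δ)}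
    [IsProbabilityMeasure P] (hP : MeasurePreserving (fun (x : ℤ → Δ) (k : ℤ) => x (k + 1)) P P)
    [FiniteDimensional ℝ (VP P)] : ∀ᵐ ω ∂P, funcOf (condFuture P ω) ∈ VP P := by
  obtain ⟨t, v, hv⟩ := (VP P).exists_finset_eq_sum_eval_smul
  let M : (ℤ → Δ) → VP P := fun ω => ∑ x : t, funcOf (condFuture P ω) x • v x
  have hM : ∀ g, ∀ᵐ ω ∂P, funcOf (condFuture P ω) g = (M ω : C(ℕ → Δ, ℝ) → ℝ) g := by
    intro g
    have hτ : ∀ (n : ℕ) (w : Fin n → Δ), funcOf (tauMeas (Pnat P) w)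
        (g - ∑ x : t, (v x : C(ℕ → Δ, ℝ) → ℝ) g • (x : C(ℕ → Δ, ℝ))) = 0 := by
      intro n w
      have hinterp :=
        congrFun (congrArg Subtype.val (hv ⟨_, Submodule.subset_span ⟨n, w, rfl⟩⟩)) g
      rw [funcOf_sub_sum_smul, sub_eq_zero]
      simpa [mul_comm] using hinterp
    filter_upwards [ae_funcOf_condFuture_eq_zero hP _ hτ] with ω hω
    rw [funcOf_sub_sum_smul, sub_eq_zero] at hω
    simp [M, hω, mul_comm]
  filter_upwards [ae_eq_of_forall_ae_apply_eq (fun ω => continuous_funcOf _)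
    (fun ω => continuous_of_mem_VP (M ω).2) hM] with ω hω
  exact hω ▸ (M ω).2

/-- If the canonical OOM vector space `V_P` of a stationary process `P` is
finite dimensional, then the conditional future distribution takes values in
`V_P ∩ P(Δ^ℕ)` almost surely; in particular the support of the causal state distribution is
contained in this finite-dimensional affine set. -/
theorem stmt19 [StandardBorelSpace Δ]
    [MeasurableSpace (ProbabilityMeasure (ℕ → Δ))] [BorelSpace (ProbabilityMeasure (ℕ → Δ))]
    (P : Measure (ℤ → Δ)) [IsProbabilityMeasure P]
    (hP : MeasurePreserving (fun (x : ℤ → Δ) (k : ℤ) => x (k + 1)) P P)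
    (hfd : FiniteDimensional ℝ (VP P)) :
    (∀ᵐ ω ∂P, funcOf (condFuture P ω) ∈ VP P) ∧
    msupport (causalDist P) ⊆
      {ρ : ProbabilityMeasure (ℕ → Δ) | funcOf (ρ : Measure (ℕ → Δ)) ∈ VP P} := by
  have hae := ae_funcOf_condFuture_mem_VP hP
  exact ⟨hae, msupport_map_subset_of_ae_mem ((VP P).closed_of_finiteDimensional.preimage
    continuous_funcOf_probabilityMeasure) hae⟩
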